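/- arXiv:1601.06336 — 9 statements merged into one kernel-verified Lean document; each statement's English description precedes it below -/
import Mathlib

section
/- Let 𝔽 be ℝ or ℂ, X a Banach space over 𝔽, and 𝒜 a standard operator algebra in B(X). Let A₁,…,Aₙ, B₁,…,Bₙ, C₁,…,Cₘ, D₁,…,Dₘ ∈ 𝒜 satisfy Σᵢ Aᵢ T Bᵢ = Σⱼ Cⱼ T Dⱼ for all T ∈ 𝒜. If A₁,…,Aₙ are linearly independent, then each Bᵢ lies in the linear span of D₁,…,Dₘ. -/
set_option synthInstance.maxHeartbeats 400000
set_option maxHeartbeats 1000000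

/-- The commutator `[A,B] = AB - BA` in a ring. -/
def bracket1 {R : Type*} [Ring R] (A B : R) : R := A * B - B * A

/-- The 3-commutator `[A,B]₃ = [[[A,B],B],B]` in a ring. -/
def bracket3 {R : Type*} [Ring R] (A B : R) : R := bracket1 (bracket1 (bracket1 A B) B) B

/-- A standard operator algebra on a normed space `X` over `𝕜` is a subalgebra of
`B(X)` (automatically containing the identity) containing all finite-rank operators. -/
def IsStandardOperatorAlgebra (𝕜 : Type*) [RCLike 𝕜] (X : Type*)
    [NormedAddCommGroup X] [NormedSpace 𝕜 X]
    (𝒜 : Subalgebra 𝕜 (X →L[𝕜] X)) : Prop :=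
  ∀ T : X →L[𝕜] X, FiniteDimensional 𝕜 (LinearMap.range (T : X →ₗ[𝕜] X)) → T ∈ 𝒜

/-!
Evaluating the identity at the rank-one operators `T = φ ⊗ x` gives, for all `x, y ∈ X` and
`φ, ψ ∈ X*`, `∑ ψ(Aᵢx) φ(Bᵢy) = ∑ ψ(Cⱼx) φ(Dⱼy)`; by Hahn–Banach, `∑ ψ(Aᵢx) Bᵢ = ∑ ψ(Cⱼx) Dⱼ`.
The functionals `T ↦ ψ(Tx)` separate the points of `B(X)`, so their span restricts onto the
whole dual of the finite-dimensional space spanned by the linearly independent `Aᵢ`. Hence some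
combination `f` of them has `f(Aᵢ) = δᵢᵢ₀`, and the same combination of the identities gives
`Bᵢ₀ = ∑ f(Cⱼ) Dⱼ`.
-/

open Module

namespace LinearIndependent

variable {K V W ι κ P : Type*} [Field K] [AddCommGroup V] [Module K V] [AddCommGroup W]
  [Module K W] [Fintype ι] [DecidableEq ι] {ev : P → Dual K V} {a : ι → V}

theorem exists_mem_span_apply_eq_single (hsep : ∀ v, (∀ p, ev p v = 0) → v = 0)
    (ha : LinearIndependent K a) (i₀ : ι) :
    ∃ f ∈ Submodule.span K (Set.range ev), ∀ i, f (a i) = (Pi.single i₀ 1 : ι → K) i := by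
  let restrict : Dual K V →ₗ[K] ι → K := LinearMap.pi fun i => Dual.eval K V (a i)
  suffices (Submodule.span K (Set.range ev)).map restrict = ⊤ by
    obtain ⟨f, hf, hfa⟩ := this.ge (Submodule.mem_top (x := Pi.single i₀ 1))
    exact ⟨f, hf, fun i => congrFun hfa i⟩
  by_contra hne
  obtain ⟨g, hg, hgbot⟩ :=
    Submodule.exists_dual_map_eq_bot_of_lt_top (lt_top_iff_ne_top.mpr hne) inferInstance
  -- `g x = ∑ i, xᵢ * g eᵢ`, so `g` kills the restriction of `ev p` iff `ev p` kills `∑ i, g eᵢ • a i`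
  have hcomb : ∑ i, g (Pi.single i 1) • a i = 0 := by
    refine hsep _ fun p => ?_
    have hp : g (restrict (ev p)) = 0 := by
      rw [← Submodule.mem_bot K, ← hgbot]
      exact Submodule.mem_map_of_mem (Submodule.mem_map_of_mem (Submodule.subset_span ⟨p, rfl⟩))
    rw [← hp, ← Finset.univ_sum_single (restrict (ev p)), map_sum, map_sum]
    refine Finset.sum_congr rfl fun i _ => ?_
    rw [← mul_one (restrict (ev p) i), ← smul_eq_mul, Pi.single_smul, map_smul, map_smul,
      smul_eq_mul, smul_eq_mul, mul_comm]
    rfl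
  refine hg (LinearMap.pi_ext' fun i => LinearMap.ext_ring ?_)
  exact Fintype.linearIndependent_iff.mp ha _ hcomb i

theorem mem_span_range_of_forall_sum_smul_eq (hsep : ∀ v, (∀ p, ev p v = 0) → v = 0)
    (ha : LinearIndependent K a) {b : ι → W} [Fintype κ] {c : κ → V} {d : κ → W}
    (h : ∀ p, ∑ i, ev p (a i) • b i = ∑ j, ev p (c j) • d j) (i₀ : ι) :
    b i₀ ∈ Submodule.span K (Set.range d) := by
  obtain ⟨f, hf, hfa⟩ := ha.exists_mem_span_apply_eq_single hsep i₀
  have hfh : ∑ i, f (a i) • b i = ∑ j, f (c j) • d j := by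
    simpa using LinearMap.eqOn_span (f := ∑ i, (Dual.eval K V (a i)).smulRight (b i))
      (g := ∑ j, (Dual.eval K V (c j)).smulRight (d j)) (by rintro _ ⟨p, rfl⟩; simpa using h p) hf
  simp only [hfa, Pi.single_apply, ite_smul, one_smul, zero_smul, Finset.sum_ite_eq',
    Finset.mem_univ, if_true] at hfh
  rw [hfh]
  exact Submodule.sum_mem _ fun j _ => Submodule.smul_mem _ _ (Submodule.subset_span ⟨j, rfl⟩)

end LinearIndependent

theorem IsStandardOperatorAlgebra.smulRight_mem {𝕜 X : Type*} [RCLike 𝕜] [NormedAddCommGroup X]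
    [NormedSpace 𝕜 X] {𝒜 : Subalgebra 𝕜 (X →L[𝕜] X)} (h𝒜 : IsStandardOperatorAlgebra 𝕜 X 𝒜)
    (φ : StrongDual 𝕜 X) (x : X) : φ.smulRight x ∈ 𝒜 := by
  refine h𝒜 _ (Submodule.finiteDimensional_of_le (S₂ := Submodule.span 𝕜 {x}) ?_)
  rintro _ ⟨y, rfl⟩
  exact Submodule.smul_mem _ _ (Submodule.mem_span_singleton_self x)

theorem IsStandardOperatorAlgebra.sum_apply_smul_eq {𝕜 X : Type*} [RCLike 𝕜]
    [NormedAddCommGroup X] [NormedSpace 𝕜 X] {𝒜 : Subalgebra 𝕜 (X →L[𝕜] X)}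
    (h𝒜 : IsStandardOperatorAlgebra 𝕜 X 𝒜) {ι κ : Type*} [Fintype ι] [Fintype κ]
    {A B : ι → 𝒜} {C D : κ → 𝒜} (heq : ∀ T : 𝒜, ∑ i, A i * T * B i = ∑ j, C j * T * D j)
    (x : X) (ψ : StrongDual 𝕜 X) :
    ∑ i, ψ ((A i : X →L[𝕜] X) x) • B i = ∑ j, ψ ((C j : X →L[𝕜] X) x) • D j := by
  refine Subtype.ext (ContinuousLinearMap.ext fun y =>
    (SeparatingDual.eq_iff_forall_dual_eq (R := 𝕜)).mpr fun φ => ?_)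
  have h := congrArg (fun T : 𝒜 => ψ ((T : X →L[𝕜] X) y))
    (heq ⟨φ.smulRight x, h𝒜.smulRight_mem φ x⟩)
  simpa [mul_comm] using h

theorem stmt_2_general {𝕜 X : Type*} [RCLike 𝕜] [NormedAddCommGroup X] [NormedSpace 𝕜 X]
    (𝒜 : Subalgebra 𝕜 (X →L[𝕜] X)) (h𝒜 : IsStandardOperatorAlgebra 𝕜 X 𝒜)
    (n m : ℕ) (A B : Fin n → 𝒜) (C D : Fin m → 𝒜)
    (heq : ∀ T : 𝒜, ∑ i, A i * T * B i = ∑ j, C j * T * D j)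
    (hind : LinearIndependent 𝕜 A) :
    ∀ i, B i ∈ Submodule.span 𝕜 (Set.range D) := by
  let ev (p : X × StrongDual 𝕜 X) : Module.Dual 𝕜 𝒜 :=
    (p.2 ∘L ContinuousLinearMap.apply 𝕜 X p.1).toLinearMap ∘ₗ 𝒜.val.toLinearMap
  have hsep (T : 𝒜) (hT : ∀ p, ev p T = 0) : T = 0 :=
    Subtype.ext (ContinuousLinearMap.ext fun x =>
      SeparatingDual.eq_zero_of_forall_dual_eq_zero fun ψ => hT (x, ψ))
  exact hind.mem_span_range_of_forall_sum_smul_eq hsep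
    fun p => h𝒜.sum_apply_smul_eq heq p.1 p.2

theorem stmt_2 {𝕜 X : Type*} [RCLike 𝕜] [NormedAddCommGroup X] [NormedSpace 𝕜 X]
    [CompleteSpace X]
    (𝒜 : Subalgebra 𝕜 (X →L[𝕜] X)) (h𝒜 : IsStandardOperatorAlgebra 𝕜 X 𝒜)
    (n m : ℕ) (A B : Fin n → 𝒜) (C D : Fin m → 𝒜)
    (heq : ∀ T : 𝒜, ∑ i, A i * T * B i = ∑ j, C j * T * D j)
    (hind : LinearIndependent 𝕜 A) :
    ∀ i, B i ∈ Submodule.span 𝕜 (Set.range D) :=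
  stmt_2_general 𝒜 h𝒜 n m A B C D heq hind
end

section
/- Let 𝔽 be ℝ or ℂ, X a Banach space over 𝔽, and 𝒜 a standard operator algebra in B(X). If A, B ∈ 𝒜 satisfy ATB = BTA for all T ∈ 𝒜, then A and B are linearly dependent. -/
set_option synthInstance.maxHeartbeats 400000
set_option maxHeartbeats 1000000

/-
Testing the identity `A T B = B T A` against the rank-one operators `T = f(·) x` gives
`f (B v) • A x = f (A v) • B x` for every functional `f` and all vectors `x, v`. If `A ≠ 0`,
choose `v` with `A v ≠ 0` and, by Hahn–Banach, `f` with `f (A v) ≠ 0`; then `B = c • A` with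
`c = f (B v) / f (A v)`.
-/

open ContinuousLinearMap

section RankOne

variable {𝕜 X : Type*} [RCLike 𝕜] [NormedAddCommGroup X] [NormedSpace 𝕜 X]

theorem ContinuousLinearMap.finiteDimensional_range_smulRight (f : X →L[𝕜] 𝕜) (x : X) :
    FiniteDimensional 𝕜 (LinearMap.range (f.smulRight x : X →ₗ[𝕜] X)) := by
  refine Submodule.finiteDimensional_of_le (S₂ := 𝕜 ∙ x) ?_
  rintro _ ⟨w, rfl⟩
  exact Submodule.mem_span_singleton.2 ⟨f w, rfl⟩

theorem IsStandardOperatorAlgebra.smulRight_mem_s3 {𝒜 : Subalgebra 𝕜 (X →L[𝕜] X)}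
    (h𝒜 : IsStandardOperatorAlgebra 𝕜 X 𝒜) (f : X →L[𝕜] 𝕜) (x : X) : f.smulRight x ∈ 𝒜 :=
  h𝒜 _ (f.finiteDimensional_range_smulRight x)

theorem ContinuousLinearMap.smul_apply_eq_of_mul_smulRight_mul {A B : X →L[𝕜] X}
    {f : X →L[𝕜] 𝕜} {x : X} (h : A * f.smulRight x * B = B * f.smulRight x * A) (v : X) :
    f (B v) • A x = f (A v) • B x := by
  simpa [mul_apply] using congr($h v)

end RankOne

theorem ContinuousLinearMap.exists_eq_smul_of_forall_apply_smul_eq {𝕜 X Y : Type*} [RCLike 𝕜]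
    [NormedAddCommGroup X] [NormedSpace 𝕜 X] [NormedAddCommGroup Y] [NormedSpace 𝕜 Y]
    {A B : X →L[𝕜] Y} (hA : A ≠ 0)
    (h : ∀ (f : Y →L[𝕜] 𝕜) (x v : X), f (B v) • A x = f (A v) • B x) :
    ∃ c : 𝕜, B = c • A := by
  obtain ⟨v, hv⟩ : ∃ v, A v ≠ 0 := by
    by_contra! hA0
    exact hA (ext hA0)
  obtain ⟨f, -, hfv⟩ := exists_dual_vector 𝕜 (A v) (norm_ne_zero_iff.2 hv)
  have hfAv : f (A v) ≠ 0 := by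
    rw [hfv]
    exact_mod_cast norm_ne_zero_iff.2 hv
  refine ⟨f (B v) / f (A v), ext fun x => ?_⟩
  rw [smul_apply, div_eq_inv_mul, mul_smul, h f x v, inv_smul_smul₀ hfAv]

theorem stmt_3_general {𝕜 X : Type*} [RCLike 𝕜] [NormedAddCommGroup X] [NormedSpace 𝕜 X]
    (𝒜 : Subalgebra 𝕜 (X →L[𝕜] X)) (h𝒜 : IsStandardOperatorAlgebra 𝕜 X 𝒜)
    (A B : 𝒜) (h : ∀ T : 𝒜, A * T * B = B * T * A) :
    ∃ a b : 𝕜, (a ≠ 0 ∨ b ≠ 0) ∧ a • A + b • B = 0 := by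
  rcases eq_or_ne A 0 with rfl | hA
  · exact ⟨1, 0, by simp, by simp⟩
  obtain ⟨c, hc⟩ := exists_eq_smul_of_forall_apply_smul_eq (A := (A : X →L[𝕜] X))
    (by exact_mod_cast hA) fun f x v =>
      smul_apply_eq_of_mul_smulRight_mul congr(Subtype.val $(h ⟨_, h𝒜.smulRight_mem_s3 f x⟩)) v
  refine ⟨c, -1, by simp, Subtype.ext ?_⟩
  simp [hc]

theorem stmt_3 {𝕜 X : Type*} [RCLike 𝕜] [NormedAddCommGroup X] [NormedSpace 𝕜 X]
    [CompleteSpace X]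
    (𝒜 : Subalgebra 𝕜 (X →L[𝕜] X)) (h𝒜 : IsStandardOperatorAlgebra 𝕜 X 𝒜)
    (A B : 𝒜) (h : ∀ T : 𝒜, A * T * B = B * T * A) :
    ∃ a b : 𝕜, (a ≠ 0 ∨ b ≠ 0) ∧ a • A + b • B = 0 :=
  stmt_3_general 𝒜 h𝒜 A B h
end

section
/- Let 𝔽 be ℝ or ℂ, X a Banach space over 𝔽, and 𝒜 a standard operator algebra in B(X). If A ∈ 𝒜 satisfies [A, P]₃ = 0 for every rank-one idempotent P ∈ 𝒜, then A = λI for some scalar λ ∈ 𝔽. -/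
set_option synthInstance.maxHeartbeats 400000
set_option maxHeartbeats 1000000

/-!
For an idempotent `P` the 3-commutator collapses to the ordinary one: `[A,P]₃ = [A,P]`.
So `A` commutes with every rank-one idempotent `x ⊗ f` (`f x = 1`, with `f`
given by Hahn–Banach for any `x ≠ 0`), and applying
`A (x ⊗ f) = (x ⊗ f) A` to `x` gives `A x = f (A x) • x`. An operator for which every vector
is an eigenvector is a scalar multiple of the identity.
-/

theorem bracket3_eq_bracket1_of_isIdempotentElem {R : Type*} [Ring R] (A : R) {P : R}
    (hP : IsIdempotentElem P) : bracket3 A P = bracket1 A P := by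
  have expand : bracket3 A P
      = A * (P * P * P) - 3 * (P * A * (P * P)) + 3 * (P * P * A * P) - P * P * P * A := by
    unfold bracket3 bracket1; noncomm_ring
  simp only [expand, hP.eq, bracket1]
  noncomm_ring

theorem commute_of_bracket3_eq_zero {R : Type*} [Ring R] {A P : R} (hP : IsIdempotentElem P)
    (h : bracket3 A P = 0) : Commute A P := by
  rwa [bracket3_eq_bracket1_of_isIdempotentElem A hP, bracket1, sub_eq_zero] at h

theorem Module.End.exists_eq_smul_one_of_forall_exists_apply_eq_smul {K V : Type*} [Field K]
    [AddCommGroup V] [Module K V] {T : Module.End K V} (h : ∀ v, ∃ c : K, T v = c • v) :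
    ∃ l : K, T = l • 1 := by
  refine LinearMap.exists_eq_smul_id_of_forall_notLinearIndependent fun v hv ↦ ?_
  obtain ⟨c, hc⟩ := h v
  have := LinearIndependent.pair_iff.mp hv c (-1) (by rw [hc]; module)
  exact neg_ne_zero.mpr one_ne_zero this.2

namespace ContinuousLinearMap

variable {𝕜 X : Type*} [RCLike 𝕜] [NormedAddCommGroup X] [NormedSpace 𝕜 X]

theorem isIdempotentElem_smulRight {f : X →L[𝕜] 𝕜} {x : X} (hfx : f x = 1) :
    IsIdempotentElem (f.smulRight x) := by
  ext y
  simp [hfx]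

theorem range_smulRight_of_apply_eq_one {f : X →L[𝕜] 𝕜} {x : X} (hfx : f x = 1) :
    LinearMap.range (f.smulRight x : X →ₗ[𝕜] X) = 𝕜 ∙ x :=
  range_smulRight_apply (by rintro rfl; simp at hfx) x

theorem apply_eq_smul_of_commute_smulRight {T : X →L[𝕜] X} {f : X →L[𝕜] 𝕜} {x : X}
    (hfx : f x = 1) (hT : Commute T (f.smulRight x)) : T x = f (T x) • x := by
  simpa [hfx] using congr($hT.eq x)

end ContinuousLinearMap

theorem stmt_4_general {𝕜 X : Type*} [RCLike 𝕜] [NormedAddCommGroup X] [NormedSpace 𝕜 X]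
    (𝒜 : Subalgebra 𝕜 (X →L[𝕜] X)) (h𝒜 : IsStandardOperatorAlgebra 𝕜 X 𝒜)
    (A : 𝒜)
    (h : ∀ P : 𝒜, P * P = P →
      Module.rank 𝕜 (LinearMap.range ((P : X →L[𝕜] X) : X →ₗ[𝕜] X)) = 1 →
      bracket3 (A : 𝒜) P = 0) :
    ∃ l : 𝕜, A = l • (1 : 𝒜) := by
  have eigen (x : X) : ∃ c : 𝕜, (A : X →L[𝕜] X) x = c • x := by
    rcases eq_or_ne x 0 with rfl | hx
    · exact ⟨0, by simp⟩
    obtain ⟨f, hfx⟩ := SeparatingDual.exists_eq_one (R := 𝕜) hx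
    have hrange := ContinuousLinearMap.range_smulRight_of_apply_eq_one hfx
    let P : 𝒜 := ⟨f.smulRight x, h𝒜 _ (hrange ▸ inferInstance)⟩
    have hP : IsIdempotentElem P :=
      Subtype.ext (ContinuousLinearMap.isIdempotentElem_smulRight hfx)
    have hrank : Module.rank 𝕜 (LinearMap.range ((P : X →L[𝕜] X) : X →ₗ[𝕜] X)) = 1 := by
      rw [hrange, Module.rank_eq_one_iff_finrank_eq_one]
      exact finrank_span_singleton hx
    have hAP := commute_of_bracket3_eq_zero hP (h P hP.eq hrank)
    exact ⟨_, ContinuousLinearMap.apply_eq_smul_of_commute_smulRight hfx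
      (congr_arg Subtype.val hAP.eq)⟩
  obtain ⟨l, hl⟩ := Module.End.exists_eq_smul_one_of_forall_exists_apply_eq_smul
    (T := ((A : X →L[𝕜] X) : Module.End 𝕜 X)) eigen
  exact ⟨l, Subtype.ext (ContinuousLinearMap.coe_injective (by simpa using hl))⟩

theorem stmt_4 {𝕜 X : Type*} [RCLike 𝕜] [NormedAddCommGroup X] [NormedSpace 𝕜 X]
    [CompleteSpace X]
    (𝒜 : Subalgebra 𝕜 (X →L[𝕜] X)) (h𝒜 : IsStandardOperatorAlgebra 𝕜 X 𝒜)
    (A : 𝒜)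
    (h : ∀ P : 𝒜, P * P = P →
      Module.rank 𝕜 (LinearMap.range ((P : X →L[𝕜] X) : X →ₗ[𝕜] X)) = 1 →
      bracket3 (A : 𝒜) P = 0) :
    ∃ l : 𝕜, A = l • (1 : 𝒜) :=
  stmt_4_general 𝒜 h𝒜 A h
end

section
/- Let 𝔽 be ℝ or ℂ, X a Banach space over 𝔽 with dim X ≥ 2, and 𝒜 a standard operator algebra in B(X). If Φ : 𝒜 → 𝒜 is a surjective strong 3-commutativity preserving map, then Φ maps the set of scalar multiples of I onto the set of scalar multiples of I, i.e. Φ(𝔽I) = 𝔽I. -/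
set_option synthInstance.maxHeartbeats 400000
set_option maxHeartbeats 1000000

theorem bracket3_smul_one_left {𝕜 R : Type*} [CommSemiring 𝕜] [Ring R] [Algebra 𝕜 R]
    (l : 𝕜) (B : R) : bracket3 (l • (1 : R)) B = 0 := by
  simp [bracket3, bracket1]

def bracket3Center (R : Type*) [Ring R] : Set R := {S | ∀ B, bracket3 S B = 0}

theorem image_bracket3Center {R : Type*} [Ring R] {Φ : R → R} (hsurj : Function.Surjective Φ)
    (hpres : ∀ A B, bracket3 (Φ A) (Φ B) = bracket3 A B) :
    Φ '' bracket3Center R = bracket3Center R := by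
  have hpre : Φ ⁻¹' bracket3Center R = bracket3Center R := Set.ext fun A =>
    ⟨fun h B => hpres A B ▸ h (Φ B), fun h C => by
      obtain ⟨B, rfl⟩ := hsurj C
      rw [hpres, h]⟩
  calc Φ '' bracket3Center R = Φ '' (Φ ⁻¹' bracket3Center R) := by rw [hpre]
    _ = bracket3Center R := hsurj.image_preimage _

theorem ContinuousLinearMap.exists_eq_smul_one_of_forall_commute_smulRight {𝕜 X : Type*}
    [Field 𝕜] [TopologicalSpace 𝕜] [IsTopologicalRing 𝕜] [AddCommGroup X] [TopologicalSpace X]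
    [Module 𝕜 X] [ContinuousSMul 𝕜 X] [SeparatingDual 𝕜 X] (T : X →L[𝕜] X)
    (h : ∀ (f : StrongDual 𝕜 X) (x : X), f x = 1 → Commute T (f.smulRight x)) :
    ∃ c : 𝕜, T = c • 1 := by
  have heigen : ∀ x : X, ¬LinearIndependent 𝕜 ![x, T x] := by
    intro x hx
    obtain ⟨f, hfx⟩ := SeparatingDual.exists_eq_one (R := 𝕜) (x := x) (hx.ne_zero 0)
    have hTx : T x = f (T x) • x := by
      have hcomm := congr($((h f x hfx).eq) x)
      simp only [mul_apply_eq_comp, ContinuousLinearMap.smulRight_apply, map_smul] at hcomm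
      rwa [hfx, one_smul] at hcomm
    have := (LinearIndependent.pair_iff.1 hx) (f (T x)) (-1) (by rw [← hTx]; simp)
    simp at this
  obtain ⟨c, hc⟩ := LinearMap.exists_eq_smul_id_of_forall_notLinearIndependent heigen
  exact ⟨c, ContinuousLinearMap.coe_injective hc⟩

namespace IsStandardOperatorAlgebra

variable {𝕜 X : Type*} [RCLike 𝕜] [NormedAddCommGroup X] [NormedSpace 𝕜 X]
  {𝒜 : Subalgebra 𝕜 (X →L[𝕜] X)}

theorem smulRight_mem_s9 (h𝒜 : IsStandardOperatorAlgebra 𝕜 X 𝒜) (f : StrongDual 𝕜 X) (x : X) :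
    f.smulRight x ∈ 𝒜 := by
  refine h𝒜 _ (Submodule.finiteDimensional_of_le (S₂ := 𝕜 ∙ x) ?_)
  rintro y ⟨z, rfl⟩
  exact Submodule.smul_mem _ _ (Submodule.mem_span_singleton_self x)

theorem mem_bracket3Center_iff (h𝒜 : IsStandardOperatorAlgebra 𝕜 X 𝒜) (S : 𝒜) :
    S ∈ bracket3Center 𝒜 ↔ ∃ l : 𝕜, S = l • 1 := by
  refine ⟨fun hS => ?_, fun ⟨l, hl⟩ B => hl ▸ bracket3_smul_one_left l B⟩
  obtain ⟨c, hc⟩ := (S : X →L[𝕜] X).exists_eq_smul_one_of_forall_commute_smulRight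
    fun f x hfx => by
      let P : 𝒜 := ⟨f.smulRight x, h𝒜.smulRight_mem_s9 f x⟩
      have hP : IsIdempotentElem P := Subtype.ext <| by ext y; simp [P, hfx]
      have hSP := hS P
      rw [bracket3_eq_bracket1_of_isIdempotentElem S hP, bracket1, sub_eq_zero] at hSP
      exact congrArg Subtype.val hSP
  exact ⟨c, Subtype.ext hc⟩

end IsStandardOperatorAlgebra

theorem stmt_9_general {𝕜 X : Type*} [RCLike 𝕜] [NormedAddCommGroup X] [NormedSpace 𝕜 X]
    (𝒜 : Subalgebra 𝕜 (X →L[𝕜] X)) (h𝒜 : IsStandardOperatorAlgebra 𝕜 X 𝒜)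
    (Φ : 𝒜 → 𝒜) (hsurj : Function.Surjective Φ)
    (hpres : ∀ A B : 𝒜, bracket3 (Φ A) (Φ B) = bracket3 A B) :
    Φ '' {A : 𝒜 | ∃ l : 𝕜, A = l • (1 : 𝒜)} = {A : 𝒜 | ∃ l : 𝕜, A = l • (1 : 𝒜)} := by
  have hscalars : {A : 𝒜 | ∃ l : 𝕜, A = l • (1 : 𝒜)} = bracket3Center 𝒜 :=
    Set.ext fun S => (h𝒜.mem_bracket3Center_iff S).symm
  rw [hscalars]
  exact image_bracket3Center hsurj hpres

theorem stmt_9 {𝕜 X : Type*} [RCLike 𝕜] [NormedAddCommGroup X] [NormedSpace 𝕜 X]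
    [CompleteSpace X] (hdim : 2 ≤ Module.rank 𝕜 X)
    (𝒜 : Subalgebra 𝕜 (X →L[𝕜] X)) (h𝒜 : IsStandardOperatorAlgebra 𝕜 X 𝒜)
    (Φ : 𝒜 → 𝒜) (hsurj : Function.Surjective Φ)
    (hpres : ∀ A B : 𝒜, bracket3 (Φ A) (Φ B) = bracket3 A B) :
    Φ '' {A : 𝒜 | ∃ l : 𝕜, A = l • (1 : 𝒜)} = {A : 𝒜 | ∃ l : 𝕜, A = l • (1 : 𝒜)} :=
  stmt_9_general 𝒜 h𝒜 Φ hsurj hpres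
end

section
/- Let 𝔽 be ℝ or ℂ, X a Banach space over 𝔽 with dim X ≥ 2, and 𝒜 a standard operator algebra in B(X). Let Φ : 𝒜 → 𝒜 be a surjective strong 3-commutativity preserving map and P ∈ 𝒜 a nontrivial idempotent (P² = P, P ≠ 0, P ≠ I). Then for every A ∈ 𝒜, P·[A, Φ(P)]₃·P = 0 and (I − P)·[A, Φ(P)]₃·(I − P) = 0. -/
set_option synthInstance.maxHeartbeats 400000
set_option maxHeartbeats 1000000

/-! For an idempotent `P` the 3-commutator `[B, P]₃` collapses to `[B, P] = BP - PB`, whose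
diagonal corners `P · P` and `(I - P) · (I - P)` vanish. Surjectivity writes `A = Φ B`, and
the preserving property turns `[Φ B, Φ P]₃` into `[B, P]₃`. -/

section Ring

variable {R : Type*} [Ring R]

theorem bracket1_one_sub_right (b p : R) : bracket1 b (1 - p) = -bracket1 b p := by
  simp only [bracket1, mul_sub, sub_mul, mul_one, one_mul]
  abel

namespace IsIdempotentElem

variable {p : R}

theorem bracket3_eq_bracket1 (hp : IsIdempotentElem p) (b : R) :
    bracket3 b p = bracket1 b p := by
  simp only [bracket3, bracket1, sub_mul, mul_sub, mul_assoc, hp.eq, hp.mul_self_mul]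
  abel

theorem mul_bracket1_mul_self (hp : IsIdempotentElem p) (b : R) : p * bracket1 b p * p = 0 := by
  simp only [bracket1, sub_mul, mul_sub, mul_assoc, hp.eq, hp.mul_self_mul, sub_self]

theorem one_sub_mul_bracket1_mul_one_sub (hp : IsIdempotentElem p) (b : R) :
    (1 - p) * bracket1 b p * (1 - p) = 0 := by
  rw [← neg_neg (bracket1 b p), ← bracket1_one_sub_right, mul_neg, neg_mul,
    hp.one_sub.mul_bracket1_mul_self, neg_zero]

end IsIdempotentElem

end Ring

theorem stmt_12_general {𝕜 X : Type*} [RCLike 𝕜] [NormedAddCommGroup X] [NormedSpace 𝕜 X]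
    (𝒜 : Subalgebra 𝕜 (X →L[𝕜] X))
    (Φ : 𝒜 → 𝒜) (hsurj : Function.Surjective Φ)
    (hpres : ∀ A B : 𝒜, bracket3 (Φ A) (Φ B) = bracket3 A B)
    (P : 𝒜) (hP : P * P = P) :
    ∀ A : 𝒜, P * bracket3 A (Φ P) * P = 0 ∧
      ((1 : 𝒜) - P) * bracket3 A (Φ P) * ((1 : 𝒜) - P) = 0 := by
  intro A
  obtain ⟨B, rfl⟩ := hsurj A
  have hPidem : IsIdempotentElem P := hP
  rw [hpres, hPidem.bracket3_eq_bracket1]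
  exact ⟨hPidem.mul_bracket1_mul_self B, hPidem.one_sub_mul_bracket1_mul_one_sub B⟩

theorem stmt_12 {𝕜 X : Type*} [RCLike 𝕜] [NormedAddCommGroup X] [NormedSpace 𝕜 X]
    [CompleteSpace X] (hdim : 2 ≤ Module.rank 𝕜 X)
    (𝒜 : Subalgebra 𝕜 (X →L[𝕜] X)) (h𝒜 : IsStandardOperatorAlgebra 𝕜 X 𝒜)
    (Φ : 𝒜 → 𝒜) (hsurj : Function.Surjective Φ)
    (hpres : ∀ A B : 𝒜, bracket3 (Φ A) (Φ B) = bracket3 A B)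
    (P : 𝒜) (hP : P * P = P) (hP0 : P ≠ 0) (hP1 : P ≠ 1) :
    ∀ A : 𝒜, P * bracket3 A (Φ P) * P = 0 ∧
      ((1 : 𝒜) - P) * bracket3 A (Φ P) * ((1 : 𝒜) - P) = 0 :=
  stmt_12_general 𝒜 Φ hsurj hpres P hP
end

section
/- Let 𝔽 be ℝ or ℂ, X a Banach space over 𝔽 with dim X ≥ 2, and 𝒜 a standard operator algebra in B(X). Let Φ : 𝒜 → 𝒜 be a surjective strong 3-commutativity preserving map and P ∈ 𝒜 a nontrivial idempotent (P² = P, P ≠ 0, P ≠ I). Then P·Φ(P)·(I − P) = 0 and (I − P)·Φ(P)·P = 0. -/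
set_option synthInstance.maxHeartbeats 400000
set_option maxHeartbeats 1000000

/-!
Write `Q = Φ P` and `q = 1 - P`. A rank-one operator `T` lies in `𝒜` and equals `Φ A` for some `A`,
so `[T, Q]₃ = [A, P]₃ = [A, P]`, whose compressions by `P` and by `q` vanish. Taking
`T = φ(·) v` turns this into identities `∑ φ(Aᵢ z) Bᵢ = 0`, i.e. `∑ Aᵢ ⊗ Bᵢ = 0`, between the
Peirce blocks `e Qᵏ f` (`e, f ∈ {P, q}`, `k ≤ 3`). Suppose the block `P Q q` is nonzero (the case
`q Q P ≠ 0` is symmetric). Evaluating the identities on a functional normalised on it, and splitting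
according to whether `q Q P` vanishes and whether the diagonal blocks are scalar, one finds a
scalar `μ` such that every block of `Q²` is `2μ` times the block of `Q` minus `μ²` times the block
of `1`, i.e. `(Q - μ)² = 0`. But then `[T, P] = [T, P]₃ = [Φ T, Q]₃ = 0` for every rank-one `T`,
which forces `P ∈ {0, 1}`.
-/

section Ring

variable {R : Type*} [Ring R]

theorem map_bracket1 {S F : Type*} [Ring S] [FunLike F R S] [RingHomClass F R S] (f : F)
    (A B : R) : f (bracket1 A B) = bracket1 (f A) (f B) := by
  simp only [bracket1, map_sub, map_mul]

theorem map_bracket3 {S F : Type*} [Ring S] [FunLike F R S] [RingHomClass F R S] (f : F)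
    (A B : R) : f (bracket3 A B) = bracket3 (f A) (f B) := by
  simp only [bracket3, map_bracket1]

theorem bracket3_eq (A B : R) :
    bracket3 A B = A * B ^ 3 - 3 • (B * A * B ^ 2) + 3 • (B ^ 2 * A * B) - B ^ 3 * A := by
  simp only [bracket3, bracket1]
  noncomm_ring

theorem IsIdempotentElem.bracket3_eq_bracket1_s13 {P : R} (hP : IsIdempotentElem P) (A : R) :
    bracket3 A P = bracket1 A P := by
  have hP' : ∀ x : R, P * (P * x) = P * x := fun x => by rw [← mul_assoc, hP.eq]
  simp only [bracket3, bracket1, mul_sub, sub_mul, mul_assoc, hP.eq, hP']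
  abel

theorem IsIdempotentElem.mul_bracket1_mul_self_s13 {P : R} (hP : IsIdempotentElem P) (A : R) :
    P * bracket1 A P * P = 0 := by
  simp only [bracket1, mul_sub, sub_mul, mul_assoc, hP.eq]
  rw [← mul_assoc P P, hP.eq, sub_self]

theorem IsIdempotentElem.one_sub_mul_bracket1_mul_one_sub_s13 {P : R} (hP : IsIdempotentElem P)
    (A : R) : (1 - P) * bracket1 A P * (1 - P) = 0 := by
  have hP' : ∀ x : R, P * (P * x) = P * x := fun x => by rw [← mul_assoc, hP.eq]
  simp only [bracket1, mul_sub, sub_mul, mul_one, one_mul, mul_assoc, hP.eq, hP']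
  abel

theorem bracket3_eq_zero_of_mul_self_eq_zero {N : R} (hN : N * N = 0) (A : R) :
    bracket3 A N = 0 := by
  have h3 : ∀ x : R, N * (N * x) = 0 := fun x => by rw [← mul_assoc, hN, zero_mul]
  simp only [bracket3, bracket1, mul_sub, sub_mul, mul_assoc, hN, h3, mul_zero, zero_mul]
  abel

theorem bracket3_eq_zero_of_sq_sub_smul_one_eq_zero {K : Type*} [CommRing K] [Algebra K R]
    {Q : R} {μ : K} (h : (Q - μ • 1) ^ 2 = 0) (A : R) : bracket3 A Q = 0 := by
  have hshift : ∀ B, bracket1 B Q = bracket1 B (Q - μ • 1) := fun B => by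
    simp only [bracket1, mul_sub, sub_mul, mul_smul_one, smul_one_mul]
    abel
  simp only [bracket3, hshift]
  exact bracket3_eq_zero_of_mul_self_eq_zero (by rwa [← sq]) A

theorem sq_sub_smul_one_eq_zero {K : Type*} [CommRing K] [Algebra K R] {Q : R} {μ : K}
    (h : Q * Q = (2 * μ) • Q - μ ^ 2 • 1) : (Q - μ • 1) ^ 2 = 0 := by
  rw [sq, sub_mul, mul_sub, mul_sub, h, mul_smul_one, smul_one_mul, smul_mul_smul_comm, one_mul]
  module

theorem IsIdempotentElem.smul_mul_smul_self {K : Type*} [CommRing K] [Algebra K R] {e : R}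
    (he : IsIdempotentElem e) (γ : K) :
    γ • e * (γ • e) = (2 * γ) • (γ • e) - γ ^ 2 • e := by
  rw [smul_mul_smul_comm, he.eq, smul_smul]
  module

variable {p q : R}

theorem IsIdempotentElem.of_add_eq_one (hp : IsIdempotentElem p) (hpq : p + q = 1) :
    IsIdempotentElem q := by
  rw [eq_sub_of_add_eq' hpq]
  exact hp.one_sub

theorem IsIdempotentElem.mul_eq_zero_of_add_eq_one (hp : IsIdempotentElem p) (hpq : p + q = 1) :
    p * q = 0 := by
  rw [eq_sub_of_add_eq' hpq, mul_sub, mul_one, hp.eq, sub_self]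

theorem IsIdempotentElem.mul_eq_zero_of_add_eq_one' (hp : IsIdempotentElem p) (hpq : p + q = 1) :
    q * p = 0 := by
  rw [eq_sub_of_add_eq' hpq, sub_mul, one_mul, hp.eq, sub_self]

theorem eq_peirce_sum (hpq : p + q = 1) (X : R) :
    X = p * X * p + p * X * q + q * X * p + q * X * q := by
  conv_lhs => rw [← one_mul X, ← mul_one (1 * X), ← hpq]
  noncomm_ring

theorem mul_mul_eq_peirce_sum (hp : IsIdempotentElem p) (hq : IsIdempotentElem q)
    (hpq : p + q = 1) (e X Y f : R) :
    e * (X * Y) * f = e * X * p * (p * Y * f) + e * X * q * (q * Y * f) := by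
  conv_lhs => rw [← mul_one X, ← hpq]
  conv_lhs => rw [← hp.eq, ← hq.eq]
  noncomm_ring

theorem sq_sub_smul_one_eq_zero_of_peirce {K : Type*} [CommRing K] [Algebra K R] {Q : R}
    {μ : K} (hpq : p + q = 1) (hpp : p * Q ^ 2 * p = (2 * μ) • (p * Q * p) - μ ^ 2 • p)
    (hpq' : p * Q ^ 2 * q = (2 * μ) • (p * Q * q)) (hqp : q * Q ^ 2 * p = (2 * μ) • (q * Q * p))
    (hqq : q * Q ^ 2 * q = (2 * μ) • (q * Q * q) - μ ^ 2 • q) : (Q - μ • 1) ^ 2 = 0 := by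
  refine sq_sub_smul_one_eq_zero ?_
  conv_lhs => rw [← sq, eq_peirce_sum hpq (Q ^ 2)]
  conv_rhs => rw [eq_peirce_sum hpq Q, ← hpq]
  rw [hpp, hpq', hqp, hqq]
  module

end Ring

section Operators

variable {𝕜 X : Type*} [NontriviallyNormedField 𝕜] [NormedAddCommGroup X] [NormedSpace 𝕜 X]

theorem ContinuousLinearMap.finiteDimensional_range_smulRight_s13 (φ : X →L[𝕜] 𝕜) (v : X) :
    FiniteDimensional 𝕜 (LinearMap.range (φ.smulRight v : X →ₗ[𝕜] X)) := by
  refine Submodule.finiteDimensional_of_le (S₂ := 𝕜 ∙ v) ?_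
  rintro _ ⟨x, rfl⟩
  exact Submodule.smul_mem _ _ (Submodule.mem_span_singleton_self v)

theorem ContinuousLinearMap.apply_apply_of_mul_eq_zero {A B : X →L[𝕜] X} (h : A * B = 0)
    (x : X) : A (B x) = 0 := by
  rw [← mul_apply_eq_comp, h, zero_apply]

variable [SeparatingDual 𝕜 X]

theorem ContinuousLinearMap.ext_dual {A B : X →L[𝕜] X}
    (h : ∀ (φ : X →L[𝕜] 𝕜) (x : X), φ (A x) = φ (B x)) : A = B :=
  ContinuousLinearMap.ext fun x => SeparatingDual.eq_iff_forall_dual_eq.2 (h · x)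

theorem ContinuousLinearMap.exists_dual_apply_eq_one {A : X →L[𝕜] X} (hA : A ≠ 0) :
    ∃ (φ : X →L[𝕜] 𝕜) (x : X), φ (A x) = 1 := by
  obtain ⟨x, hx⟩ := DFunLike.ne_iff.1 hA
  obtain ⟨φ, hφ⟩ := SeparatingDual.exists_eq_one (R := 𝕜) hx
  exact ⟨φ, x, hφ⟩

theorem IsIdempotentElem.eq_zero_or_eq_one_of_forall_commute_smulRight {p : X →L[𝕜] X}
    (hp : IsIdempotentElem p) (h : ∀ (φ : X →L[𝕜] 𝕜) (v : X), Commute (φ.smulRight v) p) :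
    p = 0 ∨ p = 1 := by
  nontriviality X
  obtain ⟨x, hx⟩ := exists_ne (0 : X)
  obtain ⟨φ, hφ⟩ := SeparatingDual.exists_eq_one (R := 𝕜) hx
  have hscalar : p = φ (p x) • 1 := by
    ext y
    simpa [hφ] using congr($(h φ y) x).symm
  have hidem : IsIdempotentElem (φ (p x)) := by
    have := hp.eq
    rw [hscalar, smul_mul_smul_comm, one_mul] at this
    exact smul_left_injective 𝕜 one_ne_zero this
  rcases IsIdempotentElem.iff_eq_zero_or_one.1 hidem with h0 | h1
  · exact Or.inl (by rw [hscalar, h0, zero_smul])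
  · exact Or.inr (by rw [hscalar, h1, one_smul])

theorem eq_smul_or_mul_self_eq_of_forall_dual [CharZero 𝕜] {e a B₁ B₂ B₃ : X →L[𝕜] X}
    (he : IsIdempotentElem e) (he0 : e ≠ 0) (hB : B₁ ≠ 0)
    (H : ∀ (φ : X →L[𝕜] 𝕜) (x : X),
      φ (B₃ x) • e = (3 * φ (B₂ x)) • a - (3 * φ (B₁ x)) • (a * a)) :
    (∃ γ : 𝕜, a = γ • e ∧ B₃ = (3 * γ) • B₂ - (3 * γ ^ 2) • B₁) ∨
      ∃ α β : 𝕜, a * a = α • a - β • e ∧ B₂ = α • B₁ ∧ B₃ = (3 * β) • B₁ := by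
  by_cases ha : ∃ γ : 𝕜, a = γ • e
  · obtain ⟨γ, rfl⟩ := ha
    refine Or.inl ⟨γ, rfl, ContinuousLinearMap.ext_dual fun φ x => ?_⟩
    have h := H φ x
    rw [smul_mul_smul_comm, he.eq, smul_smul, smul_smul, ← sub_smul] at h
    simp only [sub_apply, smul_apply, map_sub, map_smul, smul_eq_mul]
    linear_combination smul_left_injective 𝕜 he0 h
  right
  obtain ⟨φ₀, x₀, h₀⟩ := ContinuousLinearMap.exists_dual_apply_eq_one hB
  obtain ⟨α, hα⟩ : ∃ α, φ₀ (B₂ x₀) = α := ⟨_, rfl⟩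
  obtain ⟨β, hβ⟩ : ∃ β, φ₀ (B₃ x₀) = 3 * β := ⟨φ₀ (B₃ x₀) / 3, by ring⟩
  have haa : a * a = α • a - β • e := by
    have h := H φ₀ x₀
    rw [h₀, hα, hβ] at h
    linear_combination (norm := module) (3⁻¹ : 𝕜) • h
  have hcoeff (φ : X →L[𝕜] 𝕜) (x : X) :
      φ (B₂ x) = α * φ (B₁ x) ∧ φ (B₃ x) = 3 * β * φ (B₁ x) := by
    have h : (3 * (φ (B₂ x) - α * φ (B₁ x))) • a = (φ (B₃ x) - 3 * β * φ (B₁ x)) • e := by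
      have h := H φ x
      rw [haa] at h
      linear_combination (norm := module) -h
    have h₂ : φ (B₂ x) - α * φ (B₁ x) = 0 := by
      by_contra hne
      have h3 : (3 : 𝕜) * (φ (B₂ x) - α * φ (B₁ x)) ≠ 0 := mul_ne_zero three_ne_zero hne
      exact ha ⟨_, by rw [← smul_smul, ← h, inv_smul_smul₀ h3]⟩
    rw [h₂, mul_zero, zero_smul, eq_comm, smul_eq_zero_iff_left he0] at h
    exact ⟨by linear_combination h₂, by linear_combination h⟩
  refine ⟨α, β, haa, ContinuousLinearMap.ext_dual fun φ x => ?_,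
    ContinuousLinearMap.ext_dual fun φ x => ?_⟩
  · simpa only [smul_apply, map_smul, smul_eq_mul] using (hcoeff φ x).1
  · simpa only [smul_apply, map_smul, smul_eq_mul] using (hcoeff φ x).2

end Operators

section Compression

variable {𝕜 X : Type*} [NontriviallyNormedField 𝕜] [NormedAddCommGroup X] [NormedSpace 𝕜 X]

def Bracket3CompressionVanishes (e Q : X →L[𝕜] X) : Prop :=
  ∀ (φ : X →L[𝕜] 𝕜) (v : X), e * bracket3 (φ.smulRight v) Q * e = 0

namespace Bracket3CompressionVanishes

variable {e f Q : X →L[𝕜] X}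

theorem apply_eq_zero (hQ : Bracket3CompressionVanishes e Q) (φ : X →L[𝕜] 𝕜) (z v : X) :
    φ ((Q ^ 3 * e) z) • e v - (3 * φ ((Q ^ 2 * e) z)) • (e * Q) v
      + (3 * φ ((Q * e) z)) • (e * Q ^ 2) v - φ (e z) • (e * Q ^ 3) v = 0 := by
  have h := congr($(hQ φ v) z)
  simp only [bracket3_eq, mul_sub, sub_mul, mul_add, add_mul, mul_smul_comm, smul_mul_assoc,
    sub_apply, add_apply, smul_apply, mul_apply_eq_comp, ContinuousLinearMap.smulRight_apply,
    map_smul, zero_apply] at h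
  simp only [mul_apply_eq_comp]
  linear_combination (norm := module) h

theorem offDiag_identity [CharZero 𝕜] (hQ : Bracket3CompressionVanishes e Q) (hef : e * f = 0)
    (hfe : f * e = 0) (φ : X →L[𝕜] 𝕜) (z : X) :
    φ ((f * Q ^ 2 * e) z) • (e * Q * f) = φ ((f * Q * e) z) • (e * Q ^ 2 * f) := by
  ext v
  have h := hQ.apply_eq_zero (φ.comp f) z (f v)
  simp only [mul_apply_eq_comp, ContinuousLinearMap.comp_apply, map_zero,
    ContinuousLinearMap.apply_apply_of_mul_eq_zero hef,
    ContinuousLinearMap.apply_apply_of_mul_eq_zero hfe] at h ⊢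
  simp only [smul_apply, mul_apply_eq_comp]
  linear_combination (norm := module) (-3⁻¹ : 𝕜) • h

theorem corner_identity_of_lowerLeft (hQ : Bracket3CompressionVanishes e Q)
    (he : IsIdempotentElem e) (hfe : f * e = 0) (φ : X →L[𝕜] 𝕜) (z : X) :
    φ ((f * Q ^ 3 * e) z) • e
      = (3 * φ ((f * Q ^ 2 * e) z)) • (e * Q * e) - (3 * φ ((f * Q * e) z)) • (e * Q ^ 2 * e) := by
  ext v
  have h := hQ.apply_eq_zero (φ.comp f) z (e v)
  have he' : ∀ x, e (e x) = e x := fun x => by rw [← mul_apply_eq_comp, he.eq]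
  simp only [mul_apply_eq_comp, ContinuousLinearMap.comp_apply, he',
    ContinuousLinearMap.apply_apply_of_mul_eq_zero hfe, map_zero] at h ⊢
  simp only [sub_apply, smul_apply, mul_apply_eq_comp]
  linear_combination (norm := module) h

theorem corner_identity_of_upperRight [SeparatingDual 𝕜 X]
    (hQ : Bracket3CompressionVanishes e Q) (he : IsIdempotentElem e) (hef : e * f = 0)
    (ψ : X →L[𝕜] 𝕜) (v : X) :
    ψ ((e * Q ^ 3 * f) v) • e
      = (3 * ψ ((e * Q ^ 2 * f) v)) • (e * Q * e) - (3 * ψ ((e * Q * f) v)) • (e * Q ^ 2 * e) := by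
  refine ContinuousLinearMap.ext_dual fun φ z => ?_
  have h := congr(ψ $(hQ.apply_eq_zero (φ.comp e) z (f v)))
  have he' : ∀ x, e (e x) = e x := fun x => by rw [← mul_apply_eq_comp, he.eq]
  simp only [mul_apply_eq_comp, ContinuousLinearMap.comp_apply, he',
    ContinuousLinearMap.apply_apply_of_mul_eq_zero hef, map_sub, map_add, map_smul,
    map_zero, smul_eq_mul] at h ⊢
  simp only [sub_apply, smul_apply, mul_apply_eq_comp, map_sub, map_smul, smul_eq_mul]
  linear_combination -h

end Bracket3CompressionVanishes

end Compression

section Peirce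

variable {𝕜 X : Type*} [NontriviallyNormedField 𝕜] [CharZero 𝕜] [NormedAddCommGroup X]
  [NormedSpace 𝕜 X] [SeparatingDual 𝕜 X] {p q Q : X →L[𝕜] X}

theorem upperLeft_eq_smul_or_sq_of_lowerLeft_eq_zero (hp : IsIdempotentElem p) (hpq : p + q = 1)
    (Hp : Bracket3CompressionVanishes p Q) (hc : q * Q * p = 0) (hb : p * Q * q ≠ 0) :
    (∃ γ : 𝕜, p * Q * p = γ • p ∧
        p * Q ^ 3 * q = (3 * γ) • (p * Q ^ 2 * q) - (3 * γ ^ 2) • (p * Q * q)) ∨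
      ∃ μ : 𝕜, p * Q * p * (p * Q * p) = (2 * μ) • (p * Q * p) - μ ^ 2 • p ∧
        p * Q ^ 2 * q = (2 * μ) • (p * Q * q) ∧ p * Q ^ 3 * q = (3 * μ ^ 2) • (p * Q * q) := by
  have hq := hp.of_add_eq_one hpq
  have blk := mul_mul_eq_peirce_sum hp hq hpq
  have ha2 : p * Q ^ 2 * p = p * Q * p * (p * Q * p) := by
    rw [sq, blk, hc, mul_zero, add_zero]
  have hb2 : p * Q ^ 2 * q = p * Q * p * (p * Q * q) + p * Q * q * (q * Q * q) := by
    rw [sq, blk]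
  have hb3 : p * Q ^ 3 * q = p * Q ^ 2 * p * (p * Q * q) + p * Q ^ 2 * q * (q * Q * q) := by
    rw [pow_succ, blk]
  have hpb : p * (p * Q * q) = p * Q * q := by rw [← mul_assoc, ← mul_assoc, hp.eq]
  have hp0 : p ≠ 0 := by rintro rfl; simp at hb
  have H := Hp.corner_identity_of_upperRight hp (hp.mul_eq_zero_of_add_eq_one hpq)
  rw [ha2] at H
  rcases eq_smul_or_mul_self_eq_of_forall_dual hp hp0 hb H with h | ⟨α, β, haa, hαb, hβb⟩
  · exact Or.inl h
  have hβ : 3 * β = α ^ 2 - β := by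
    refine smul_left_injective 𝕜 hb ?_
    calc (3 * β) • (p * Q * q) = p * Q ^ 3 * q := hβb.symm
      _ = α • (p * Q * p * (p * Q * q) + p * Q * q * (q * Q * q)) - β • (p * (p * Q * q)) := by
        rw [hb3, ha2, haa, hαb]
        simp only [sub_mul, smul_mul_assoc]
        module
      _ = (α ^ 2 - β) • (p * Q * q) := by
        rw [← hb2, hαb, hpb]
        module
  obtain rfl : β = (α / 2) ^ 2 := by linear_combination hβ / 4
  refine Or.inr ⟨α / 2, ?_, ?_, ?_⟩ <;>
    simp only [haa, hαb, hβb, mul_div_cancel₀ α (two_ne_zero' 𝕜)]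

theorem lowerRight_eq_smul_or_sq_of_lowerLeft_eq_zero (hp : IsIdempotentElem p) (hpq : p + q = 1)
    (Hq : Bracket3CompressionVanishes q Q) (hc : q * Q * p = 0) (hb : p * Q * q ≠ 0) :
    (∃ δ : 𝕜, q * Q * q = δ • q ∧
        p * Q ^ 3 * q = (3 * δ) • (p * Q ^ 2 * q) - (3 * δ ^ 2) • (p * Q * q)) ∨
      ∃ μ : 𝕜, q * Q * q * (q * Q * q) = (2 * μ) • (q * Q * q) - μ ^ 2 • q ∧
        p * Q ^ 2 * q = (2 * μ) • (p * Q * q) ∧ p * Q ^ 3 * q = (3 * μ ^ 2) • (p * Q * q) := by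
  have hq := hp.of_add_eq_one hpq
  have blk := mul_mul_eq_peirce_sum hp hq hpq
  have hd2 : q * Q ^ 2 * q = q * Q * q * (q * Q * q) := by
    rw [sq, blk, hc, zero_mul, zero_add]
  have hb2 : p * Q ^ 2 * q = p * Q * p * (p * Q * q) + p * Q * q * (q * Q * q) := by
    rw [sq, blk]
  have hb3 : p * Q ^ 3 * q = p * Q * p * (p * Q ^ 2 * q) + p * Q * q * (q * Q ^ 2 * q) := by
    rw [pow_succ', blk]
  have hbq : p * Q * q * q = p * Q * q := by rw [mul_assoc, hq.eq]
  have hq0 : q ≠ 0 := by rintro rfl; simp at hb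
  have H := Hq.corner_identity_of_lowerLeft hq (hp.mul_eq_zero_of_add_eq_one hpq)
  rw [hd2] at H
  rcases eq_smul_or_mul_self_eq_of_forall_dual hq hq0 hb H with h | ⟨α, β, hdd, hαb, hβb⟩
  · exact Or.inl h
  have hβ : 3 * β = α ^ 2 - β := by
    refine smul_left_injective 𝕜 hb ?_
    calc (3 * β) • (p * Q * q) = p * Q ^ 3 * q := hβb.symm
      _ = α • (p * Q * p * (p * Q * q) + p * Q * q * (q * Q * q)) - β • (p * Q * q * q) := by
        rw [hb3, hd2, hdd, hαb]
        simp only [mul_sub, mul_smul_comm]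
        module
      _ = (α ^ 2 - β) • (p * Q * q) := by
        rw [← hb2, hαb, hbq]
        module
  obtain rfl : β = (α / 2) ^ 2 := by linear_combination hβ / 4
  refine Or.inr ⟨α / 2, ?_, ?_, ?_⟩ <;>
    simp only [hdd, hαb, hβb, mul_div_cancel₀ α (two_ne_zero' 𝕜)]

theorem exists_sq_sub_smul_one_eq_zero_of_lowerLeft_eq_zero (hp : IsIdempotentElem p)
    (hpq : p + q = 1) (Hp : Bracket3CompressionVanishes p Q)
    (Hq : Bracket3CompressionVanishes q Q) (hc : q * Q * p = 0) (hb : p * Q * q ≠ 0) :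
    ∃ μ : 𝕜, (Q - μ • 1) ^ 2 = 0 := by
  have hq := hp.of_add_eq_one hpq
  have blk := mul_mul_eq_peirce_sum hp hq hpq
  have finish (μ : 𝕜) (ha : p * Q * p * (p * Q * p) = (2 * μ) • (p * Q * p) - μ ^ 2 • p)
      (hb2 : p * Q ^ 2 * q = (2 * μ) • (p * Q * q))
      (hd : q * Q * q * (q * Q * q) = (2 * μ) • (q * Q * q) - μ ^ 2 • q) :
      ∃ μ : 𝕜, (Q - μ • 1) ^ 2 = 0 :=
    ⟨μ, sq_sub_smul_one_eq_zero_of_peirce hpq (by rw [sq, blk, hc, mul_zero, add_zero, ha]) hb2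
      (by rw [sq, blk, hc, zero_mul, mul_zero, zero_add, smul_zero])
      (by rw [sq, blk, hc, zero_mul, zero_add, hd])⟩
  have hsmul := smul_left_injective 𝕜 hb
  rcases upperLeft_eq_smul_or_sq_of_lowerLeft_eq_zero hp hpq Hp hc hb with
    ⟨γ, ha, hγ⟩ | ⟨μ, haa, hμ2, hμ3⟩ <;>
  rcases lowerRight_eq_smul_or_sq_of_lowerLeft_eq_zero hp hpq Hq hc hb with
    ⟨δ, hd, hδ⟩ | ⟨ν, hdd, hν2, hν3⟩
  · have hpb : p * (p * Q * q) = p * Q * q := by rw [← mul_assoc, ← mul_assoc, hp.eq]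
    have hbq : p * Q * q * q = p * Q * q := by rw [mul_assoc, hq.eq]
    have hγδ : p * Q ^ 2 * q = (γ + δ) • (p * Q * q) := by
      rw [sq, blk, ha, hd, smul_mul_assoc, mul_smul_comm, hpb, hbq, add_smul]
    have hb3 : p * Q ^ 3 * q = (γ * (γ + δ) + δ ^ 2) • (p * Q * q) := by
      rw [pow_succ', blk, hγδ, sq, blk, hc, zero_mul, zero_add, ha, hd]
      simp only [smul_mul_assoc, mul_smul_comm, hpb, hbq, hq.eq, smul_smul]
      module
    obtain rfl : δ = γ := by
      have h := hsmul (hb3.symm.trans (hγ.trans (by rw [hγδ, smul_smul, ← sub_smul])))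
      have h2 : (δ - γ) ^ 2 = 0 := by linear_combination h
      simpa [sub_eq_zero] using h2
    exact finish δ (by rw [ha, hp.smul_mul_smul_self]) (by rw [hγδ, two_mul])
      (by rw [hd, hq.smul_mul_smul_self])
  · obtain rfl : ν = γ := by
      have h := hsmul (hν3.symm.trans (hγ.trans (by rw [hν2, smul_smul, ← sub_smul])))
      have h2 : (ν - γ) ^ 2 = 0 := by linear_combination h / 3
      simpa [sub_eq_zero] using h2
    exact finish ν (by rw [ha, hp.smul_mul_smul_self]) hν2 hdd
  · obtain rfl : μ = δ := by
      have h := hsmul (hμ3.symm.trans (hδ.trans (by rw [hμ2, smul_smul, ← sub_smul])))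
      have h2 : (μ - δ) ^ 2 = 0 := by linear_combination h / 3
      simpa [sub_eq_zero] using h2
    exact finish μ haa hμ2 (by rw [hd, hq.smul_mul_smul_self])
  · obtain rfl : μ = ν := by
      have h := hsmul (hμ2.symm.trans hν2)
      linear_combination h / 2
    exact finish μ haa hμ2 hdd

theorem exists_offDiag_sq_eq_smul (hpq : p * q = 0) (hqp : q * p = 0)
    (Hp : Bracket3CompressionVanishes p Q) (Hq : Bracket3CompressionVanishes q Q)
    (hb : p * Q * q ≠ 0) (hc : q * Q * p ≠ 0) :
    ∃ μ : 𝕜, p * Q ^ 2 * q = (2 * μ) • (p * Q * q) ∧ q * Q ^ 2 * p = (2 * μ) • (q * Q * p) := by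
  obtain ⟨φb, zb, hφb⟩ := ContinuousLinearMap.exists_dual_apply_eq_one hb
  obtain ⟨φc, zc, hφc⟩ := ContinuousLinearMap.exists_dual_apply_eq_one hc
  refine ⟨φb ((p * Q ^ 2 * q) zb) / 2, ?_⟩
  rw [mul_div_cancel₀ _ (two_ne_zero' 𝕜)]
  have hc2 : q * Q ^ 2 * p = φb ((p * Q ^ 2 * q) zb) • (q * Q * p) := by
    have h := Hq.offDiag_identity hqp hpq φb zb
    rw [hφb, one_smul] at h
    exact h.symm
  refine ⟨?_, hc2⟩
  have h := Hp.offDiag_identity hpq hqp φc zc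
  rw [hc2, smul_apply, map_smul, hφc, smul_eq_mul, mul_one, one_smul] at h
  exact h.symm

theorem exists_upperLeft_sq_eq (hp : IsIdempotentElem p) (hqp : q * p = 0)
    (Hp : Bracket3CompressionVanishes p Q) (hc : q * Q * p ≠ 0) {μ : 𝕜}
    (hc2 : q * Q ^ 2 * p = (2 * μ) • (q * Q * p)) :
    ∃ ν : 𝕜, p * Q ^ 2 * p = (2 * μ) • (p * Q * p) - ν • p := by
  obtain ⟨φ, z, hφ⟩ := ContinuousLinearMap.exists_dual_apply_eq_one hc
  have h := Hp.corner_identity_of_lowerLeft hp hqp φ z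
  rw [hc2, smul_apply, map_smul, hφ, smul_eq_mul, mul_one] at h
  exact ⟨φ ((q * Q ^ 3 * p) z) / 3, by linear_combination (norm := module) (3⁻¹ : 𝕜) • h⟩

theorem lowerRight_sq_eq_of_upperLeft_sq_eq (hp : IsIdempotentElem p) (hpq : p + q = 1)
    (Hq : Bracket3CompressionVanishes q Q) (hb : p * Q * q ≠ 0) {μ ν : 𝕜}
    (hb2 : p * Q ^ 2 * q = (2 * μ) • (p * Q * q))
    (ha2 : p * Q ^ 2 * p = (2 * μ) • (p * Q * p) - ν • p) :
    q * Q ^ 2 * q = (2 * μ) • (q * Q * q) - ((4 * μ ^ 2 - ν) / 3) • q := by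
  have hq := hp.of_add_eq_one hpq
  have blk := mul_mul_eq_peirce_sum hp hq hpq
  have hb3 : p * Q ^ 3 * q = (4 * μ ^ 2 - ν) • (p * Q * q) := by
    calc p * Q ^ 3 * q
        = (2 * μ) • (p * Q * p * (p * Q * q) + p * Q * q * (q * Q * q))
            - ν • (p * (p * Q * q)) := by
          rw [pow_succ, blk, ha2, hb2]
          simp only [sub_mul, smul_mul_assoc]
          module
      _ = (4 * μ ^ 2 - ν) • (p * Q * q) := by
          rw [← blk, ← sq, hb2, ← mul_assoc, ← mul_assoc, hp.eq]
          module
  obtain ⟨φ, z, hφ⟩ := ContinuousLinearMap.exists_dual_apply_eq_one hb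
  have h := Hq.corner_identity_of_lowerLeft hq (hp.mul_eq_zero_of_add_eq_one hpq) φ z
  rw [hb3, hb2, smul_apply, smul_apply, map_smul, map_smul, hφ, smul_eq_mul, smul_eq_mul,
    mul_one, mul_one] at h
  linear_combination (norm := module) (3⁻¹ : 𝕜) • h

theorem exists_sq_sub_smul_one_eq_zero_of_offDiag_ne_zero (hp : IsIdempotentElem p)
    (hpq : p + q = 1) (Hp : Bracket3CompressionVanishes p Q)
    (Hq : Bracket3CompressionVanishes q Q) (hb : p * Q * q ≠ 0) (hc : q * Q * p ≠ 0) :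
    ∃ μ : 𝕜, (Q - μ • 1) ^ 2 = 0 := by
  have hq := hp.of_add_eq_one hpq
  have hqp := hp.mul_eq_zero_of_add_eq_one' hpq
  obtain ⟨μ, hb2, hc2⟩ :=
    exists_offDiag_sq_eq_smul (hp.mul_eq_zero_of_add_eq_one hpq) hqp Hp Hq hb hc
  obtain ⟨ν, ha2⟩ := exists_upperLeft_sq_eq hp hqp Hp hc hc2
  have hd2 := lowerRight_sq_eq_of_upperLeft_sq_eq hp hpq Hq hb hb2 ha2
  have ha2' := lowerRight_sq_eq_of_upperLeft_sq_eq hq (by rwa [add_comm]) Hp hc hc2 hd2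
  -- going around both corners gives `ν = (4μ² - (4μ² - ν) / 3) / 3`
  obtain rfl : ν = μ ^ 2 := by
    have hp0 : p ≠ 0 := by rintro rfl; simp at hb
    have h := smul_left_injective 𝕜 hp0 (sub_right_injective (ha2.symm.trans ha2'))
    linear_combination 9 / 8 * h
  refine ⟨μ, sq_sub_smul_one_eq_zero_of_peirce hpq ha2 hb2 hc2 ?_⟩
  rw [hd2]
  module

theorem exists_sq_sub_smul_one_eq_zero_of_upperRight_ne_zero (hp : IsIdempotentElem p)
    (hpq : p + q = 1) (Hp : Bracket3CompressionVanishes p Q)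
    (Hq : Bracket3CompressionVanishes q Q) (hb : p * Q * q ≠ 0) :
    ∃ μ : 𝕜, (Q - μ • 1) ^ 2 = 0 := by
  by_cases hc : q * Q * p = 0
  · exact exists_sq_sub_smul_one_eq_zero_of_lowerLeft_eq_zero hp hpq Hp Hq hc hb
  · exact exists_sq_sub_smul_one_eq_zero_of_offDiag_ne_zero hp hpq Hp Hq hb hc

end Peirce

section StandardOperatorAlgebra

variable {𝕜 X : Type*} [RCLike 𝕜] [NormedAddCommGroup X] [NormedSpace 𝕜 X]
  {𝒜 : Subalgebra 𝕜 (X →L[𝕜] X)} {Φ : 𝒜 → 𝒜}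

theorem coe_bracket3_eq_of_preserves (hpres : ∀ A B : 𝒜, bracket3 (Φ A) (Φ B) = bracket3 A B)
    (A B : 𝒜) : bracket3 (Φ A : X →L[𝕜] X) (Φ B) = bracket3 (A : X →L[𝕜] X) B := by
  simpa only [map_bracket3, Subalgebra.coe_val] using congr(𝒜.val $(hpres A B))

theorem bracket3CompressionVanishes_of_preserves (h𝒜 : IsStandardOperatorAlgebra 𝕜 X 𝒜)
    (hsurj : Function.Surjective Φ) (hpres : ∀ A B : 𝒜, bracket3 (Φ A) (Φ B) = bracket3 A B)
    {P : 𝒜} (hP : IsIdempotentElem (P : X →L[𝕜] X)) :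
    Bracket3CompressionVanishes (P : X →L[𝕜] X) (Φ P) ∧
      Bracket3CompressionVanishes (1 - P : X →L[𝕜] X) (Φ P) := by
  have key : ∀ (φ : X →L[𝕜] 𝕜) (v : X), ∃ A : 𝒜,
      bracket3 (φ.smulRight v) (Φ P : X →L[𝕜] X) = bracket1 (A : X →L[𝕜] X) P := by
    intro φ v
    obtain ⟨A, hA⟩ := hsurj ⟨_, h𝒜 _ (φ.finiteDimensional_range_smulRight_s13 v)⟩
    refine ⟨A, ?_⟩
    rw [← hP.bracket3_eq_bracket1_s13, ← coe_bracket3_eq_of_preserves hpres, hA]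
  constructor <;> intro φ v <;> obtain ⟨A, hA⟩ := key φ v <;> rw [hA]
  · exact hP.mul_bracket1_mul_self_s13 _
  · exact hP.one_sub_mul_bracket1_mul_one_sub_s13 _

theorem commute_smulRight_of_sq_sub_smul_one_eq_zero (h𝒜 : IsStandardOperatorAlgebra 𝕜 X 𝒜)
    (hpres : ∀ A B : 𝒜, bracket3 (Φ A) (Φ B) = bracket3 A B) {P : 𝒜}
    (hP : IsIdempotentElem (P : X →L[𝕜] X)) {μ : 𝕜} (hμ : ((Φ P : X →L[𝕜] X) - μ • 1) ^ 2 = 0)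
    (φ : X →L[𝕜] 𝕜) (v : X) : Commute (φ.smulRight v) (P : X →L[𝕜] X) := by
  have h := coe_bracket3_eq_of_preserves hpres
    ⟨_, h𝒜 _ (φ.finiteDimensional_range_smulRight_s13 v)⟩ P
  rw [bracket3_eq_zero_of_sq_sub_smul_one_eq_zero hμ, eq_comm,
    hP.bracket3_eq_bracket1_s13] at h
  exact sub_eq_zero.1 h

end StandardOperatorAlgebra

theorem stmt_13_general {𝕜 X : Type*} [RCLike 𝕜] [NormedAddCommGroup X] [NormedSpace 𝕜 X]
    (𝒜 : Subalgebra 𝕜 (X →L[𝕜] X)) (h𝒜 : IsStandardOperatorAlgebra 𝕜 X 𝒜)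
    (Φ : 𝒜 → 𝒜) (hsurj : Function.Surjective Φ)
    (hpres : ∀ A B : 𝒜, bracket3 (Φ A) (Φ B) = bracket3 A B)
    (P : 𝒜) (hP : P * P = P) (hP0 : P ≠ 0) (hP1 : P ≠ 1) :
    P * Φ P * ((1 : 𝒜) - P) = 0 ∧ ((1 : 𝒜) - P) * Φ P * P = 0 := by
  have hp : IsIdempotentElem (P : X →L[𝕜] X) := congr(Subtype.val $hP)
  obtain ⟨Hp, Hq⟩ := bracket3CompressionVanishes_of_preserves h𝒜 hsurj hpres hp
  have hQ : ∀ μ : 𝕜, ((Φ P : X →L[𝕜] X) - μ • 1) ^ 2 ≠ 0 := fun μ hμ =>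
    (hp.eq_zero_or_eq_one_of_forall_commute_smulRight
      (commute_smulRight_of_sq_sub_smul_one_eq_zero h𝒜 hpres hp hμ)).elim
      (fun h => hP0 (Subtype.ext h)) (fun h => hP1 (Subtype.ext h))
  have hb : (P : X →L[𝕜] X) * Φ P * (1 - P) = 0 := by
    by_contra hb
    obtain ⟨μ, hμ⟩ := exists_sq_sub_smul_one_eq_zero_of_upperRight_ne_zero hp (add_sub_cancel _ _)
      Hp Hq hb
    exact hQ μ hμ
  have hc : (1 - P : X →L[𝕜] X) * Φ P * P = 0 := by
    by_contra hc
    obtain ⟨μ, hμ⟩ := exists_sq_sub_smul_one_eq_zero_of_upperRight_ne_zero hp.one_sub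
      (sub_add_cancel _ _) Hq Hp hc
    exact hQ μ hμ
  exact ⟨Subtype.ext (by simpa using hb), Subtype.ext (by simpa using hc)⟩

theorem stmt_13 {𝕜 X : Type*} [RCLike 𝕜] [NormedAddCommGroup X] [NormedSpace 𝕜 X]
    [CompleteSpace X] (hdim : 2 ≤ Module.rank 𝕜 X)
    (𝒜 : Subalgebra 𝕜 (X →L[𝕜] X)) (h𝒜 : IsStandardOperatorAlgebra 𝕜 X 𝒜)
    (Φ : 𝒜 → 𝒜) (hsurj : Function.Surjective Φ)
    (hpres : ∀ A B : 𝒜, bracket3 (Φ A) (Φ B) = bracket3 A B)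
    (P : 𝒜) (hP : P * P = P) (hP0 : P ≠ 0) (hP1 : P ≠ 1) :
    P * Φ P * ((1 : 𝒜) - P) = 0 ∧ ((1 : 𝒜) - P) * Φ P * P = 0 :=
  stmt_13_general 𝒜 h𝒜 Φ hsurj hpres P hP hP0 hP1
end

section
/- Let 𝔽 be ℝ or ℂ and let M₂(𝔽) be the algebra of 2×2 matrices over 𝔽. If Φ : M₂(𝔽) → M₂(𝔽) is a surjective map satisfying [Φ(A), Φ(B)]₃ = [A, B]₃ for all A, B ∈ M₂(𝔽), then there exist a functional h : M₂(𝔽) → 𝔽 and a scalar λ ∈ 𝔽 with λ⁴ = 1 such that Φ(A) = λA + h(A)·I for all A ∈ M₂(𝔽). -/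
set_option maxHeartbeats 4000000 in
theorem stmt_16 {𝕜 : Type*} [RCLike 𝕜]
    (Φ : Matrix (Fin 2) (Fin 2) 𝕜 → Matrix (Fin 2) (Fin 2) 𝕜)
    (hsurj : Function.Surjective Φ)
    (hpres : ∀ A B : Matrix (Fin 2) (Fin 2) 𝕜, bracket3 (Φ A) (Φ B) = bracket3 A B) :
    ∃ (h : Matrix (Fin 2) (Fin 2) 𝕜 → 𝕜) (l : 𝕜), l ^ 4 = 1 ∧
      ∀ A : Matrix (Fin 2) (Fin 2) 𝕜, Φ A = l • A + h A • (1 : Matrix (Fin 2) (Fin 2) 𝕜) := by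
  have key : ∀ A B : Matrix (Fin 2) (Fin 2) 𝕜,
      bracket3 A B = ((B 0 0 - B 1 1)^2 + 4 * (B 0 1 * B 1 0)) • bracket1 A B := by
    intro A B
    ext i j
    fin_cases i <;> fin_cases j <;>
      simp [bracket3, bracket1, Matrix.mul_apply, Fin.sum_univ_two, Matrix.sub_apply] <;> ring
  have hP : ∀ A B, (((Φ B) 0 0 - (Φ B) 1 1)^2 + 4 * ((Φ B) 0 1 * (Φ B) 1 0)) • bracket1 (Φ A) (Φ B)
      = ((B 0 0 - B 1 1)^2 + 4 * (B 0 1 * B 1 0)) • bracket1 A B := by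
    intro A B; rw [← key, ← key, hpres]
  obtain ⟨u, hu⟩ := hsurj !![1,0;0,-1]
  obtain ⟨v, hv⟩ := hsurj !![0,1;0,0]
  obtain ⟨w, hw⟩ := hsurj !![0,0;1,0]
  obtain ⟨p, hp⟩ := hsurj !![0,1;1,0]
  obtain ⟨a1,b1,c1,d1,rfl⟩ : ∃ a b c d, u = !![a,b;c,d] := ⟨_,_,_,_, Matrix.eta_fin_two u⟩
  obtain ⟨a2,b2,c2,d2,rfl⟩ : ∃ a b c d, v = !![a,b;c,d] := ⟨_,_,_,_, Matrix.eta_fin_two v⟩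
  obtain ⟨a3,b3,c3,d3,rfl⟩ : ∃ a b c d, w = !![a,b;c,d] := ⟨_,_,_,_, Matrix.eta_fin_two w⟩
  obtain ⟨a4,b4,c4,d4,rfl⟩ : ∃ a b c d, p = !![a,b;c,d] := ⟨_,_,_,_, Matrix.eta_fin_two p⟩
  have I1 := hP !![a2,b2;c2,d2] !![a1,b1;c1,d1]; rw [hu, hv] at I1
  have I2 := hP !![a1,b1;c1,d1] !![a2,b2;c2,d2]; rw [hu, hv] at I2
  have I3 := hP !![a3,b3;c3,d3] !![a1,b1;c1,d1]; rw [hu, hw] at I3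
  have I5 := hP !![a4,b4;c4,d4] !![a1,b1;c1,d1]; rw [hu, hp] at I5
  have I6 := hP !![a2,b2;c2,d2] !![a4,b4;c4,d4]; rw [hv, hp] at I6
  have e1a := congrFun (congrFun I1 0) 0
  have e1b := congrFun (congrFun I1 0) 1
  have e1c := congrFun (congrFun I1 1) 0
  have e2b := congrFun (congrFun I2 0) 1
  have e3a := congrFun (congrFun I3 0) 0
  have e3c := congrFun (congrFun I3 1) 0
  have e5b := congrFun (congrFun I5 0) 1
  have e5c := congrFun (congrFun I5 1) 0
  have e6a := congrFun (congrFun I6 0) 0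
  have e6b := congrFun (congrFun I6 0) 1
  clear I1 I2 I3 I5 I6
  simp [bracket1, Matrix.mul_apply, Fin.sum_univ_two] at e1a e1b
  simp [bracket1, Matrix.mul_apply, Fin.sum_univ_two] at e1c e2b
  simp [bracket1, Matrix.mul_apply, Fin.sum_univ_two] at e3a e3c
  simp [bracket1, Matrix.mul_apply, Fin.sum_univ_two] at e5b e5c
  simp [bracket1, Matrix.mul_apply, Fin.sum_univ_two] at e6a e6b
  -- basic nonvanishing facts
  have hDu : ¬((a1 - d1) ^ 2 + 4 * (b1 * c1) = 0) := by
    intro h0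
    have : (-8 : 𝕜) = 0 := by
      linear_combination e1b + (a2 * b1 + b2 * d1 - (a1 * b2 + b1 * d2)) * h0
    norm_num at this
  have hK : ¬(a2 * b1 + b2 * d1 - (a1 * b2 + b1 * d2) = 0) := by
    intro h0
    have : (-8 : 𝕜) = 0 := by
      linear_combination e1b + ((a1 - d1) ^ 2 + 4 * (b1 * c1)) * h0
    norm_num at this
  have h1a := e1a.resolve_left hDu
  have h1c := e1c.resolve_left hDu
  have hdv : (a2 - d2) ^ 2 + 4 * (b2 * c2) = 0 :=
    e2b.resolve_right (fun hh => hK (by linear_combination -hh))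
  have hα : ¬(a1 - d1 = 0) := by
    intro h0
    apply hK
    have hb1c1 : ¬(b1 * c1 = 0) := fun hh => hDu (by linear_combination (a1 - d1) * h0 + 4 * hh)
    have hc1' : ¬(c1 = 0) := fun hh => hb1c1 (by rw [hh, mul_zero])
    have hε : a2 - d2 = 0 := by
      rcases mul_eq_zero.mp (show c1 * (a2 - d2) = 0 by linear_combination c2 * h0 - h1c) with h | h
      · exact absurd h hc1'
      · exact h
    linear_combination b1 * hε - b2 * h0
  have hc1 : c1 = 0 := by
    rcases mul_eq_zero.mp (show c1 * (a2 * b1 + b2 * d1 - (a1 * b2 + b1 * d2)) = 0 by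
        linear_combination (-b1) * h1c - (a1 - d1) * h1a) with h | h
    · exact h
    · exact absurd h hK
  subst hc1
  have hc2 : c2 = 0 := by
    rcases mul_eq_zero.mp (show c2 * (a1 - d1) = 0 by linear_combination h1c) with h | h
    · exact h
    · exact absurd h hα
  subst hc2
  have hd2 : d2 = a2 := by
    have h2 : (a2 - d2) ^ 2 = 0 := by linear_combination hdv
    have h3 := pow_eq_zero_iff (two_ne_zero) |>.mp h2
    linear_combination -h3
  subst hd2
  have hc3 : (a1 - d1) ^ 3 * c3 = 8 := by linear_combination -e3c
  have hc3ne : ¬(c3 = 0) := fun hh =>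
    absurd (show (8 : 𝕜) = 0 by linear_combination -hc3 + (a1 - d1) ^ 3 * hh) (by norm_num)
  have hb1 : b1 = 0 := by
    rcases mul_eq_zero.mp (show b1 * c3 = 0 by linear_combination -(e3a.resolve_left hDu)) with h | h
    · exact h
    · exact absurd h hc3ne
  subst hb1
  have hb2 : (a1 - d1) ^ 3 * b2 = 8 := by linear_combination e1b
  have hb4 : (a1 - d1) ^ 3 * b4 = 8 := by linear_combination e5b
  have hc4 : (a1 - d1) ^ 3 * c4 = 8 := by linear_combination -e5c
  have hb2ne : ¬(b2 = 0) := fun hh =>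
    absurd (show (8 : 𝕜) = 0 by linear_combination -hb2 + (a1 - d1) ^ 3 * hh) (by norm_num)
  have hdpne : ¬((a4 - d4) ^ 2 + 4 * (b4 * c4) = 0) := fun hh =>
    absurd (show (4 : 𝕜) = 0 by linear_combination e6a + (b2 * c4) * hh) (by norm_num)
  have hd4 : d4 = a4 := by
    rcases mul_eq_zero.mp (show b2 * (d4 - a4) = 0 by
        linear_combination e6b.resolve_left hdpne) with h | h
    · exact absurd h hb2ne
    · linear_combination h
  subst hd4
  have t4 : b2 * b4 * c4 ^ 2 = 1 := by linear_combination (-1/4 : 𝕜) * e6a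
  have t1 : (a1 - d1) ^ 6 * (b2 * b4) = 64 := by
    linear_combination ((a1 - d1) ^ 3 * b4) * hb2 + 8 * hb4
  have t2 : (a1 - d1) ^ 9 * (b2 * b4 * c4) = 512 := by
    linear_combination ((a1 - d1) ^ 6 * (b2 * b4)) * hc4 + 8 * t1
  have t5 : (a1 - d1) ^ 12 = 4096 := by
    linear_combination ((a1 - d1) ^ 3 * c4) * t2 + 512 * hc4 - (a1 - d1) ^ 12 * t4
  have s1 : (a1 - d1) ^ 6 * b4 ^ 2 = 64 := by
    linear_combination ((a1 - d1) ^ 3 * b4 + 8) * hb4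
  have s2 : (a1 - d1) ^ 9 * (b4 ^ 2 * c4) = 512 := by
    linear_combination ((a1 - d1) ^ 6 * b4 ^ 2) * hc4 + 8 * s1
  have hb4c4 : 8 * (b4 ^ 2 * c4) = (a1 - d1) ^ 3 := by
    rcases mul_eq_zero.mp (show (a1 - d1) ^ 9 * (8 * (b4 ^ 2 * c4) - (a1 - d1) ^ 3) = 0 by
        linear_combination 8 * s2 - t5) with h | h
    · exact absurd h (pow_ne_zero _ hα)
    · linear_combination h
  refine ⟨fun A => Φ A 0 0 - ((a1 - d1) ^ 3 / 8) * A 0 0, (a1 - d1) ^ 3 / 8, ?_, ?_⟩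
  · field_simp
    linear_combination t5
  · intro A
    have J1 := hP A !![a1, 0; 0, d1]; rw [hu] at J1
    have J2 := hP A !![d4, b4; c4, d4]; rw [hp] at J2
    have j1b := congrFun (congrFun J1 0) 1
    have j1c := congrFun (congrFun J1 1) 0
    have j2b := congrFun (congrFun J2 0) 1
    clear J1 J2
    simp [bracket1, Matrix.mul_apply, Matrix.vecMul, dotProduct, Matrix.vecHead, Matrix.vecTail, Fin.sum_univ_two] at j1b j1c j2b
    have hX01 : Φ A 0 1 = ((a1 - d1) ^ 3 / 8) * A 0 1 := by
      field_simp
      linear_combination -j1b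
    have hX10 : Φ A 1 0 = ((a1 - d1) ^ 3 / 8) * A 1 0 := by
      field_simp
      linear_combination j1c
    have hXd : Φ A 0 0 - Φ A 1 1 = ((a1 - d1) ^ 3 / 8) * (A 0 0 - A 1 1) := by
      field_simp
      linear_combination 2 * j2b + (A 0 0 - A 1 1) * hb4c4
    refine Matrix.ext fun i j => ?_
    fin_cases i <;> fin_cases j
    · simp [Matrix.one_apply] <;> ring
    · simp [Matrix.one_apply] <;> linear_combination hX01
    · simp [Matrix.one_apply] <;> linear_combination hX10
    · simp [Matrix.one_apply] <;> linear_combination -hXd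
end

section
/- Let 𝔽 be ℝ or ℂ and let M₂(𝔽) be the algebra of 2×2 matrices over 𝔽, with matrix units E₁₁, E₁₂, E₂₁, E₂₂. If Φ : M₂(𝔽) → M₂(𝔽) is a surjective map satisfying [Φ(A), Φ(B)]₃ = [A, B]₃ for all A, B ∈ M₂(𝔽), then for every a ∈ 𝔽 there exist scalars c, μ ∈ 𝔽 such that Φ(a·E₁₂) = c·E₁₂ + μ·I. -/
section Ring

variable {R : Type*} [Ring R]

theorem bracket3_eq_neg_of_mul_eq {x e : R} (hex : e * x = x) (hxe : x * e = 0) :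
    bracket3 x e = -x := by
  simp [bracket3, bracket1, hex, hxe]

theorem mul_bracket1_mul_eq_zero_of_mul_self_eq_zero {N : R} (hN : N * N = 0) (B : R) :
    N * bracket1 N B * N = 0 := by
  simp only [bracket1, mul_sub, sub_mul, ← mul_assoc, hN, zero_mul]
  rw [mul_assoc, hN, mul_zero, sub_zero]

variable {K : Type*} [CommRing K] [Algebra K R]

theorem bracket3_eq_smul_bracket1_of_mul_self_eq {B : R} {t d : K}
    (hB : B * B = t • B - d • 1) (A : R) :
    bracket3 A B = (t ^ 2 - 4 * d) • bracket1 A B := by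
  have hB3 : B * B * B = (t ^ 2 - d) • B - (t * d) • 1 := by
    rw [hB, sub_mul, smul_mul_assoc, smul_mul_assoc, hB, one_mul]
    module
  have expand : bracket3 A B =
      A * (B * B * B) - 3 • (B * A * (B * B)) + 3 • (B * B * A * B) - B * B * B * A := by
    simp only [bracket3, bracket1]; noncomm_ring
  rw [expand, hB3, hB]
  simp only [bracket1, mul_sub, sub_mul, mul_smul_comm, smul_mul_assoc, mul_one, one_mul, mul_assoc]
  module

end Ring

namespace Matrix

section CommRing

variable {R : Type*} [CommRing R]

theorem mul_self_fin_two (M : Matrix (Fin 2) (Fin 2) R) :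
    M * M = M.trace • M - M.det • 1 := by
  ext i j
  fin_cases i <;> fin_cases j <;> simp [mul_apply, trace_fin_two, det_fin_two] <;> ring

theorem bracket3_fin_two (A B : Matrix (Fin 2) (Fin 2) R) :
    bracket3 A B = B.discr • bracket1 A B := by
  rw [bracket3_eq_smul_bracket1_of_mul_self_eq B.mul_self_fin_two, discr_fin_two]

theorem discr_scalar_fin_two (r : R) : (scalar (Fin 2) r).discr = 0 := by
  simp [discr_fin_two]
  ring

theorem discr_smul_single_zero_one (a : R) : (a • single (0 : Fin 2) 1 (1 : R)).discr = 0 := by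
  simp [discr_fin_two, det_fin_two]

theorem discr_single_zero_zero : (single (0 : Fin 2) 0 (1 : R)).discr = 1 := by
  simp [discr_fin_two, det_fin_two]

theorem apply_one_zero_eq_zero_of_bracket3_single_zero_zero_eq_zero
    {M : Matrix (Fin 2) (Fin 2) R} (h : bracket3 M (single 0 0 1) = 0) : M 1 0 = 0 := by
  rw [bracket3_fin_two, discr_single_zero_zero, one_smul] at h
  simpa [bracket1, mul_apply] using congr_fun₂ h 1 0

theorem eq_smul_single_add_smul_one_of_discr_eq_zero [IsReduced R] {M : Matrix (Fin 2) (Fin 2) R}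
    (hM : M.discr = 0) (h10 : M 1 0 = 0) :
    M = M 0 1 • single 0 1 1 + M 1 1 • 1 := by
  have hsq : (M 0 0 - M 1 1) ^ 2 = 0 := by
    rw [← hM, discr_fin_two, trace_fin_two, det_fin_two, h10]
    ring
  have h00 : M 0 0 = M 1 1 := sub_eq_zero.mp (IsReduced.eq_zero _ ⟨2, hsq⟩)
  ext i j
  fin_cases i <;> fin_cases j <;> simp [h00, h10]

end CommRing

section Field

variable {K : Type*} [Field K]

theorem discr_eq_zero_of_forall_bracket3_eq_zero {M : Matrix (Fin 2) (Fin 2) K}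
    (h : ∀ X, bracket3 X M = 0) : M.discr = 0 := by
  by_contra hM
  have hcenter : M ∈ Set.center (Matrix (Fin 2) (Fin 2) K) :=
    Semigroup.mem_center_iff.mpr fun X ↦ by
      have hX := h X
      rw [bracket3_fin_two, smul_eq_zero] at hX
      exact sub_eq_zero.mp (hX.resolve_left hM)
  rw [center_eq_range] at hcenter
  obtain ⟨r, rfl⟩ := hcenter
  exact hM (discr_scalar_fin_two r)

theorem apply_one_zero_eq_zero_of_bracket3_eq_smul_single [NeZero (2 : K)]
    {M Y : Matrix (Fin 2) (Fin 2) K} {c : K} (hM : M.discr = 0)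
    (h : bracket3 M Y = c • single 0 1 1) (hc : c ≠ 0) : M 1 0 = 0 := by
  set N := M - scalar (Fin 2) (M.trace / 2)
  have hN : N * N = 0 := by
    rw [← sq, sub_scalar_sq_eq_discr, hM, zero_div, map_zero]
  have hNY : bracket1 N Y = bracket1 M Y := by
    rw [bracket1, bracket1, sub_mul, mul_sub, (scalar_commute _ (Commute.all _) Y).eq]
    abel
  have hzero : N * (c • single 0 1 1) * N = 0 := by
    rw [← h, bracket3_fin_two, ← hNY, mul_smul_comm, smul_mul_assoc,
      mul_bracket1_mul_eq_zero_of_mul_self_eq_zero hN, smul_zero]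
  simpa [mul_apply, N, hc] using congr_fun₂ hzero 1 0

end Field

end Matrix

open Matrix in
theorem stmt_18 {𝕜 : Type*} [RCLike 𝕜]
    (Φ : Matrix (Fin 2) (Fin 2) 𝕜 → Matrix (Fin 2) (Fin 2) 𝕜)
    (hsurj : Function.Surjective Φ)
    (hpres : ∀ A B : Matrix (Fin 2) (Fin 2) 𝕜, bracket3 (Φ A) (Φ B) = bracket3 A B) :
    ∀ a : 𝕜, ∃ c mu : 𝕜,
      Φ (a • Matrix.single 0 1 (1 : 𝕜)) =
        c • Matrix.single 0 1 (1 : 𝕜) + mu • (1 : Matrix (Fin 2) (Fin 2) 𝕜) := by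
  intro a
  set M := Φ (a • single 0 1 1)
  have hM : M.discr = 0 := discr_eq_zero_of_forall_bracket3_eq_zero fun X ↦ by
    obtain ⟨A, rfl⟩ := hsurj X
    rw [hpres, bracket3_fin_two, discr_smul_single_zero_one, zero_smul]
  have h10 : M 1 0 = 0 := by
    rcases eq_or_ne a 0 with rfl | ha
    · obtain ⟨B, hB⟩ := hsurj (single 0 0 1)
      refine apply_one_zero_eq_zero_of_bracket3_single_zero_zero_eq_zero ?_
      rw [← hB, hpres, zero_smul]
      simp [bracket3, bracket1]
    · have h : bracket3 M (Φ (single 0 0 1)) = (-a) • single 0 1 1 := by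
        rw [hpres, bracket3_eq_neg_of_mul_eq (by simp) (by simp), neg_smul]
      exact apply_one_zero_eq_zero_of_bracket3_eq_smul_single hM h (neg_ne_zero.mpr ha)
  exact ⟨_, _, eq_smul_single_add_smul_one_of_discr_eq_zero hM h10⟩
end

section
/- Let 𝔽 be ℝ or ℂ and let M₂(𝔽) be the algebra of 2×2 matrices over 𝔽, with matrix units E₁₁, E₁₂, E₂₁, E₂₂. If Φ : M₂(𝔽) → M₂(𝔽) is a surjective map satisfying [Φ(A), Φ(B)]₃ = [A, B]₃ for all A, B ∈ M₂(𝔽), then for every a ∈ 𝔽 there exist scalars c, μ ∈ 𝔽 such that Φ(a·E₁₁) = c·E₁₁ + μ·I. -/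
/-!
For `2 × 2` matrices `[Z, M]₃ = Δ(M) • [Z, M]`, where `Δ(M) = tr(M)² - 4 det(M)` is the
discriminant of `M`. Let `M = Φ(a E₁₁)`. If `Δ(M) ≠ 0`, pick `Y` with `Φ(Y) = E_ij` (`i ≠ j`):
the `(i, i)` entry of `[E_ij, M]₃ = [Y, a E₁₁]₃` is `Δ(M) M_ji` on the left and `0` on the right,
because commutators with diagonal matrices have zero diagonal. So `M` is diagonal.
If `Δ(M) = 0`, then `[Z, a E₁₁]₃ = 0` for every `Z`, and `Z = E₁₂` forces `a³ = 0`. Finally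
`Φ(0)` commutes with `E₁₁ = Φ(X)`, since `[Φ(0), E₁₁]₃ = [0, X]₃ = 0` and `Δ(E₁₁) = 1`.
-/

open Matrix

theorem isDiag_fin_two_iff {α : Type*} [Zero α] {M : Matrix (Fin 2) (Fin 2) α} :
    M.IsDiag ↔ M 0 1 = 0 ∧ M 1 0 = 0 := by
  refine ⟨fun h => ⟨h (by decide), h (by decide)⟩, fun ⟨h01, h10⟩ i j hij => ?_⟩
  fin_cases i <;> fin_cases j <;> first | exact absurd rfl hij | assumption

section CommRing

variable {R : Type*} [CommRing R]

/-- On `2 × 2` matrices `ad M` is annihilated by `X (X² - discr M)`. -/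
theorem bracket3_eq_discr_smul_bracket1 (Z M : Matrix (Fin 2) (Fin 2) R) :
    bracket3 Z M = M.discr • bracket1 Z M := by
  ext i j
  fin_cases i <;> fin_cases j <;>
    simp [bracket3, bracket1, discr_fin_two, mul_apply, Fin.sum_univ_two, trace_fin_two,
      det_fin_two] <;> ring

theorem bracket1_apply_self_of_isDiag {n : Type*} [Fintype n] [DecidableEq n] (X : Matrix n n R)
    {D : Matrix n n R} (hD : D.IsDiag) (i : n) : bracket1 X D i i = 0 := by
  rw [← hD.diagonal_diag]
  simp [bracket1, mul_comm]

theorem bracket1_single_apply_self {n : Type*} [Fintype n] [DecidableEq n] {i j : n}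
    (hij : i ≠ j) (c : R) (M : Matrix n n R) : bracket1 (single i j c) M i i = c * M j i := by
  simp [bracket1, mul_single_apply_of_ne (hbj := hij)]

theorem isDiag_smul_single_self {n : Type*} [DecidableEq n] (a : R) (i : n) :
    (a • single i i (1 : R)).IsDiag := by
  rw [smul_single, smul_eq_mul, mul_one, ← diagonal_single]
  exact isDiag_diagonal _

theorem exists_eq_smul_single_add_smul_one {M : Matrix (Fin 2) (Fin 2) R} (hM : M.IsDiag) :
    ∃ c μ : R, M = c • single 0 0 1 + μ • 1 := by
  obtain ⟨h01, h10⟩ := isDiag_fin_two_iff.1 hM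
  refine ⟨M 0 0 - M 1 1, M 1 1, ?_⟩
  ext i j
  fin_cases i <;> fin_cases j <;> simp [h01, h10, one_apply]

variable {Φ : Matrix (Fin 2) (Fin 2) R → Matrix (Fin 2) (Fin 2) R}
  (hpres : ∀ A B, bracket3 (Φ A) (Φ B) = bracket3 A B)
include hpres

theorem isDiag_apply_of_isDiag_of_discr_ne_zero [IsDomain R] (hsurj : Function.Surjective Φ)
    {D : Matrix (Fin 2) (Fin 2) R} (hD : D.IsDiag) (hΔ : (Φ D).discr ≠ 0) : (Φ D).IsDiag := by
  intro j i hji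
  show Φ D j i = 0
  obtain ⟨Y, hY⟩ := hsurj (single i j 1)
  have h := congr_fun₂ (hpres Y D) i i
  rw [hY, bracket3_eq_discr_smul_bracket1, bracket3_eq_discr_smul_bracket1] at h
  simp only [Matrix.smul_apply, bracket1_single_apply_self hji.symm,
    bracket1_apply_self_of_isDiag _ hD, smul_eq_mul, one_mul, mul_zero, mul_eq_zero] at h
  exact h.resolve_left hΔ

theorem eq_zero_of_discr_apply_smul_single_eq_zero [IsDomain R] {a : R}
    (hΔ : (Φ (a • single 0 0 1)).discr = 0) : a = 0 := by
  have h := congr_fun₂ (hpres (single 0 1 1) (a • single 0 0 1)) 0 1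
  rw [bracket3_eq_discr_smul_bracket1, bracket3_eq_discr_smul_bracket1, hΔ, zero_smul] at h
  have ha : a ^ 3 = 0 := by
    simpa [discr_fin_two, trace_fin_two, det_fin_two, bracket1, mul_apply, Fin.sum_univ_two,
      pow_succ] using h
  exact pow_eq_zero_iff three_ne_zero |>.1 ha

theorem isDiag_apply_zero (hsurj : Function.Surjective Φ) : (Φ 0).IsDiag := by
  obtain ⟨X, hX⟩ := hsurj (single 0 0 1)
  have h := hpres 0 X
  rw [hX, bracket3_eq_discr_smul_bracket1] at h
  have h0 : bracket1 (Φ 0) (single 0 0 1) = 0 := by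
    simpa [discr_fin_two, trace_fin_two, det_fin_two, bracket3, bracket1] using h
  refine isDiag_fin_two_iff.2 ⟨?_, ?_⟩
  · simpa [bracket1] using congr_fun₂ h0 0 1
  · simpa [bracket1] using congr_fun₂ h0 1 0

end CommRing

theorem stmt_19 {𝕜 : Type*} [RCLike 𝕜]
    (Φ : Matrix (Fin 2) (Fin 2) 𝕜 → Matrix (Fin 2) (Fin 2) 𝕜)
    (hsurj : Function.Surjective Φ)
    (hpres : ∀ A B : Matrix (Fin 2) (Fin 2) 𝕜, bracket3 (Φ A) (Φ B) = bracket3 A B) :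
    ∀ a : 𝕜, ∃ c mu : 𝕜,
      Φ (a • Matrix.single 0 0 (1 : 𝕜)) =
        c • Matrix.single 0 0 (1 : 𝕜) + mu • (1 : Matrix (Fin 2) (Fin 2) 𝕜) := by
  intro a
  apply exists_eq_smul_single_add_smul_one
  by_cases hΔ : (Φ (a • single 0 0 1)).discr = 0
  · rw [eq_zero_of_discr_apply_smul_single_eq_zero hpres hΔ, zero_smul]
    exact isDiag_apply_zero hpres hsurj
  · exact isDiag_apply_of_isDiag_of_discr_ne_zero hpres hsurj (isDiag_smul_single_self a 0) hΔ
end
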